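/- Let η(s) = (1/2)(1 + tanh(s/2)). For any r₀ > 0 there exists M₁ > 0 such that for all s, h ∈ ℝ with |h| ≤ r₀, |η(s + h) - η(s)| / η'(s) ≤ M₁. -/

import Mathlib

/-!
η is the logistic function σ(s) = 1 / (1 + e^{-s}), with σ' = σ (1 - σ). The increment factors
exactly as σ(s + h) - σ(s) = (e^h - 1) σ(s) (1 - σ(s + h)), so the ratio in question equals
|e^h - 1| (1 - σ(s + h)) / (1 - σ(s)); a shift by h changes 1 - σ = σ(-·) by a factor at most e^{|h|}.
-/

open Real

lemma Real.sigmoid_eq_half_mul_one_add_tanh (x : ℝ) :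
    sigmoid x = 1 / 2 * (1 + tanh (x / 2)) := by
  have hexp : exp (-x) = (exp (x / 2) ^ 2)⁻¹ := by rw [← exp_nat_mul, ← exp_neg]; ring_nf
  rw [sigmoid_def, tanh_eq_sinh_div_cosh, sinh_eq, cosh_eq, hexp, exp_neg]
  have := exp_pos (x / 2)
  field_simp
  ring

lemma Real.sigmoid_add_sub_sigmoid (s h : ℝ) :
    sigmoid (s + h) - sigmoid s = (exp h - 1) * sigmoid s * (1 - sigmoid (s + h)) := by
  rw [← sigmoid_neg, sigmoid_def, sigmoid_def, sigmoid_def, neg_neg, exp_neg, exp_neg, exp_add]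
  have := exp_pos s
  have := exp_pos h
  field_simp
  ring

lemma Real.sigmoid_add_le_exp_abs_mul (x h : ℝ) : sigmoid (x + h) ≤ exp |h| * sigmoid x := by
  rw [sigmoid_def, sigmoid_def, ← div_eq_mul_inv, inv_eq_one_div,
    div_le_div_iff₀ (by positivity) (by positivity), one_mul, mul_add, mul_one, ← exp_add]
  have : 1 ≤ exp |h| := one_le_exp (abs_nonneg h)
  have : exp (-x) ≤ exp (|h| + -(x + h)) := exp_le_exp.mpr (by linarith [le_abs_self h])
  linarith

lemma Real.abs_exp_sub_one_le_exp_abs_sub_one (x : ℝ) : |exp x - 1| ≤ exp |x| - 1 := by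
  rcases le_or_gt 0 x with hx | hx
  · rw [abs_of_nonneg hx, abs_of_nonneg (by linarith [add_one_le_exp x])]
  · have hinv : exp x * exp (-x) = 1 := by rw [← exp_add, add_neg_cancel, exp_zero]
    have : exp x < 1 := exp_lt_one_iff.mpr hx
    have : 1 < exp (-x) := one_lt_exp_iff.mpr (by linarith)
    rw [abs_of_neg hx, abs_of_neg (by linarith)]
    nlinarith

lemma Real.abs_sigmoid_add_sub_le (s h : ℝ) :
    |sigmoid (s + h) - sigmoid s| ≤ (exp |h| - 1) * exp |h| * (sigmoid s * (1 - sigmoid s)) := by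
  have hσ : 0 < sigmoid s := sigmoid_pos s
  have hσ' : 0 < 1 - sigmoid (s + h) := sub_pos.mpr (sigmoid_lt_one _)
  have hshift : 1 - sigmoid (s + h) ≤ exp |h| * (1 - sigmoid s) := by
    simpa only [← sigmoid_neg, neg_add, abs_neg] using sigmoid_add_le_exp_abs_mul (-s) (-h)
  rw [sigmoid_add_sub_sigmoid, abs_mul, abs_mul, abs_of_pos hσ, abs_of_pos hσ']
  calc |exp h - 1| * sigmoid s * (1 - sigmoid (s + h))
      ≤ (exp |h| - 1) * sigmoid s * (exp |h| * (1 - sigmoid s)) := by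
        have := sub_nonneg.mpr (one_le_exp (abs_nonneg h))
        gcongr
        exact abs_exp_sub_one_le_exp_abs_sub_one h
    _ = (exp |h| - 1) * exp |h| * (sigmoid s * (1 - sigmoid s)) := by ring

theorem eta_increment_ratio_bounded (η : ℝ → ℝ)
    (hη : ∀ s : ℝ, η s = (1 / 2) * (1 + Real.tanh (s / 2))) :
    ∀ r₀ : ℝ, 0 < r₀ → ∃ M₁ : ℝ, 0 < M₁ ∧
      ∀ s h : ℝ, |h| ≤ r₀ → |η (s + h) - η s| / deriv η s ≤ M₁ := by
  obtain rfl : η = sigmoid :=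
    funext fun s => (hη s).trans (sigmoid_eq_half_mul_one_add_tanh s).symm
  intro r₀ hr₀
  have hexp : 1 < exp r₀ := one_lt_exp_iff.mpr hr₀
  refine ⟨(exp r₀ - 1) * exp r₀, mul_pos (sub_pos.mpr hexp) (exp_pos r₀), fun s h hh => ?_⟩
  have hderiv : 0 < sigmoid s * (1 - sigmoid s) :=
    mul_pos (sigmoid_pos s) (sub_pos.mpr (sigmoid_lt_one s))
  rw [deriv_sigmoid, div_le_iff₀ hderiv]
  calc |sigmoid (s + h) - sigmoid s|
      ≤ (exp |h| - 1) * exp |h| * (sigmoid s * (1 - sigmoid s)) := abs_sigmoid_add_sub_le s h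
    _ ≤ (exp r₀ - 1) * exp r₀ * (sigmoid s * (1 - sigmoid s)) := by
        have : 1 ≤ exp |h| := one_le_exp (abs_nonneg h)
        gcongr
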